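/- arXiv:2507.14561 — 5 statements merged into one kernel-verified Lean document; each statement's English description precedes it below -/
import Mathlib

section
/- Let d ≥ 1, let q₀ ∈ ℝ^d, let r > 0, let u : B(q₀,r) → ℝ be a function on the open ball B(q₀,r), and let C > 0. Define A^{C,u} to be the set of points q ∈ B(q₀,r) for which there exists a linear map φ_q : ℝ^d → ℝ such that |u(y) − u(q) − φ_q(y − q)| ≤ C‖y − q‖² for all y ∈ B(q₀,r). Then: (1) u is differentiable at every q ∈ A^{C,u} (within B(q₀,r)) with derivative d_qu = φ_q; and (2) the map q ↦ d_qu restricted to {q ∈ A^{C,u} : ‖q − q₀‖ ≤ r/3} is Lipschitz with Lipschitz constant 6C. -/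
/-! The derivative at `q'` is compared with the one at `q` by testing both on a point `y`
with `‖y - q'‖ < ‖q - q'‖`: the three quadratic error bounds at `(q, y)`, `(q', y)` and `(q, q')`
control `(φ - φ') (y - q')` by `6 C ‖q - q'‖²`. Such `y` fill an open ball of radius `‖q - q'‖`
around `q'` inside `B(q₀, r)`; by continuity the bound holds on its closure, and dividing by the
radius bounds `‖φ - φ'‖` by `6 C ‖q - q'‖`. -/

open Filter MeasureTheory Metric Set

def fathiSet (d : ℕ) (q₀ : EuclideanSpace ℝ (Fin d)) (r C : ℝ)
    (u : EuclideanSpace ℝ (Fin d) → ℝ) : Set (EuclideanSpace ℝ (Fin d)) :=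
  {q | q ∈ Metric.ball q₀ r ∧ ∃ φ : EuclideanSpace ℝ (Fin d) →L[ℝ] ℝ,
    ∀ y ∈ Metric.ball q₀ r, |u y - u q - φ (y - q)| ≤ C * ‖y - q‖ ^ 2}

open Topology

section QuadraticApprox

variable {𝕜 E F : Type*} [NontriviallyNormedField 𝕜] [NormedAddCommGroup E] [NormedSpace 𝕜 E]
  [NormedAddCommGroup F] [NormedSpace 𝕜 F]

def QuadraticApproxWithin (C : ℝ) (f : E → F) (φ : E →L[𝕜] F) (s : Set E) (q : E) : Prop :=
  ∀ y ∈ s, ‖f y - f q - φ (y - q)‖ ≤ C * ‖y - q‖ ^ 2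

theorem QuadraticApproxWithin.hasFDerivWithinAt {C : ℝ} {f : E → F} {φ : E →L[𝕜] F}
    {s : Set E} {q : E} (h : QuadraticApproxWithin C f φ s q) : HasFDerivWithinAt f φ s q := by
  have hO : (fun y => f y - f q - φ (y - q)) =O[𝓝[s] q] fun y => ‖y - q‖ ^ 2 :=
    Asymptotics.IsBigO.of_bound C <| eventually_nhdsWithin_of_forall fun y hy => by
      simpa [abs_of_nonneg (sq_nonneg ‖y - q‖)] using h y hy
  exact hasFDerivWithinAt_iff_isLittleO.mpr <|
    hO.trans_isLittleO ((Asymptotics.isLittleO_pow_sub_sub q one_lt_two).mono nhdsWithin_le_nhds)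

theorem QuadraticApproxWithin.norm_sub_apply_le {C : ℝ} {f : E → F} {φ φ' : E →L[𝕜] F}
    {s : Set E} {q q' y : E} (h : QuadraticApproxWithin C f φ s q)
    (h' : QuadraticApproxWithin C f φ' s q') (hq' : q' ∈ s) (hy : y ∈ s) :
    ‖(φ - φ') (y - q')‖ ≤ C * (‖y - q‖ ^ 2 + ‖y - q'‖ ^ 2 + ‖q' - q‖ ^ 2) := by
  have hsplit : (φ - φ') (y - q') =
      (f y - f q' - φ' (y - q')) + (f q' - f q - φ (q' - q)) - (f y - f q - φ (y - q)) := by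
    simp only [sub_apply, map_sub]
    abel
  calc ‖(φ - φ') (y - q')‖
      ≤ ‖f y - f q' - φ' (y - q')‖ + ‖f q' - f q - φ (q' - q)‖ + ‖f y - f q - φ (y - q)‖ := by
        rw [hsplit]; exact (norm_sub_le _ _).trans (add_le_add_left (norm_add_le _ _) _)
    _ ≤ C * ‖y - q'‖ ^ 2 + C * ‖q' - q‖ ^ 2 + C * ‖y - q‖ ^ 2 := by
        gcongr
        exacts [h' y hy, h q' hq', h y hy]
    _ = C * (‖y - q‖ ^ 2 + ‖y - q'‖ ^ 2 + ‖q' - q‖ ^ 2) := by ring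

end QuadraticApprox

section RealValued

variable {E : Type*} [NormedAddCommGroup E] [NormedSpace ℝ E]

theorem QuadraticApproxWithin.dist_le {C : ℝ} {f : E → ℝ} {φ φ' : StrongDual ℝ E}
    {s : Set E} {q q' : E} (h : QuadraticApproxWithin C f φ s q)
    (h' : QuadraticApproxWithin C f φ' s q') (hC : 0 ≤ C) (hne : q ≠ q')
    (hs : ball q' (dist q q') ⊆ s) : dist φ φ' ≤ 6 * C * dist q q' := by
  set δ := dist q q'
  have hδ : 0 < δ := dist_pos.mpr hne
  have hq' : q' ∈ s := hs (mem_ball_self hδ)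
  have hopen : ∀ v ∈ ball (0 : E) δ, ‖(φ - φ') v‖ ≤ 6 * C * δ ^ 2 := by
    intro v hv
    rw [mem_ball_zero_iff] at hv
    have hy : q' + v ∈ s := hs (by simpa [dist_eq_norm] using hv)
    have hq'q : ‖q' - q‖ = δ := by rw [norm_sub_rev, ← dist_eq_norm]
    have hyq : ‖q' + v - q‖ ≤ 2 * δ := by
      calc ‖q' + v - q‖ = ‖v + (q' - q)‖ := by congr 1; abel
        _ ≤ ‖v‖ + ‖q' - q‖ := norm_add_le _ _
        _ ≤ 2 * δ := by linarith
    calc ‖(φ - φ') v‖ = ‖(φ - φ') (q' + v - q')‖ := by rw [add_sub_cancel_left]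
      _ ≤ C * (‖q' + v - q‖ ^ 2 + ‖q' + v - q'‖ ^ 2 + ‖q' - q‖ ^ 2) :=
        h.norm_sub_apply_le h' hq' hy
      _ ≤ C * ((2 * δ) ^ 2 + δ ^ 2 + δ ^ 2) := by
        rw [add_sub_cancel_left, hq'q]
        gcongr
      _ = 6 * C * δ ^ 2 := by ring
  have hclosed : ∀ v ∈ closedBall (0 : E) δ, ‖(φ - φ') v‖ ≤ 6 * C * δ ^ 2 := by
    rw [← closure_ball 0 hδ.ne']
    exact closure_minimal hopen (isClosed_le (φ - φ').continuous.norm continuous_const)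
  calc dist φ φ' = ‖φ - φ'‖ := dist_eq_norm _ _
    _ ≤ 6 * C * δ ^ 2 / δ := ContinuousLinearMap.opNorm_bound_of_ball_bound hδ _ _ hclosed
    _ = 6 * C * δ := by field_simp

end RealValued

theorem fathi_lipschitz_criterion_general (d : ℕ)
    (q₀ : EuclideanSpace ℝ (Fin d)) (r : ℝ)
    (u : EuclideanSpace ℝ (Fin d) → ℝ) (C : ℝ) (hC : 0 < C) :
    (∀ q ∈ fathiSet d q₀ r C u, ∀ φ : EuclideanSpace ℝ (Fin d) →L[ℝ] ℝ,
      (∀ y ∈ Metric.ball q₀ r, |u y - u q - φ (y - q)| ≤ C * ‖y - q‖ ^ 2) →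
      HasFDerivWithinAt u φ (Metric.ball q₀ r) q) ∧
    LipschitzOnWith (Real.toNNReal (6 * C))
      (fun q => fderivWithin ℝ u (Metric.ball q₀ r) q)
      {q ∈ fathiSet d q₀ r C u | ‖q - q₀‖ ≤ r / 3} := by
  have hderiv : ∀ q ∈ ball q₀ r, ∀ φ, QuadraticApproxWithin C u φ (ball q₀ r) q →
      fderivWithin ℝ u (ball q₀ r) q = φ := fun q hq _ hφ =>
    hφ.hasFDerivWithinAt.fderivWithin (isOpen_ball.uniqueDiffWithinAt hq)
  refine ⟨fun q _ φ hφ => QuadraticApproxWithin.hasFDerivWithinAt hφ, ?_⟩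
  refine LipschitzOnWith.of_dist_le_mul fun p ⟨⟨hp, φ, hφ⟩, hp₃⟩ p' ⟨⟨hp', φ', hφ'⟩, hp'₃⟩ => ?_
  rcases eq_or_ne p p' with rfl | hne
  · simp
  have hball : ball p' (dist p p') ⊆ ball q₀ r := by
    rw [← dist_eq_norm] at hp₃ hp'₃
    refine ball_subset_ball' ?_
    linarith [dist_triangle_right p p' q₀]
  rw [hderiv p hp φ hφ, hderiv p' hp' φ' hφ', Real.coe_toNNReal _ (by positivity)]
  exact QuadraticApproxWithin.dist_le hφ hφ' hC.le hne hball

/-- Fathi's criterion for a Lipschitz derivative (Lemma 4.10):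
every point of `A^{C,u}` is a point of differentiability of `u` (within the ball),
with derivative the linear map `φ_q`, and the derivative map is Lipschitz with
constant `6C` on the part of `A^{C,u}` at distance at most `r/3` from the center. -/
theorem fathi_lipschitz_criterion (d : ℕ) (hd : 1 ≤ d)
    (q₀ : EuclideanSpace ℝ (Fin d)) (r : ℝ) (hr : 0 < r)
    (u : EuclideanSpace ℝ (Fin d) → ℝ) (C : ℝ) (hC : 0 < C) :
    (∀ q ∈ fathiSet d q₀ r C u, ∀ φ : EuclideanSpace ℝ (Fin d) →L[ℝ] ℝ,
      (∀ y ∈ Metric.ball q₀ r, |u y - u q - φ (y - q)| ≤ C * ‖y - q‖ ^ 2) →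
      HasFDerivWithinAt u φ (Metric.ball q₀ r) q) ∧
    LipschitzOnWith (Real.toNNReal (6 * C))
      (fun q => fderivWithin ℝ u (Metric.ball q₀ r) q)
      {q ∈ fathiSet d q₀ r C u | ‖q - q₀‖ ≤ r / 3} :=
  fathi_lipschitz_criterion_general d q₀ r u C hC
end

section
/- Let U ⊆ ℝ^d be open, let f : U → ℝ be Lipschitz on U, and let U₀ ⊆ U be a subset such that U \ U₀ has Lebesgue measure zero and f is differentiable at every point of U₀. Fix q ∈ U and define K_f^{U₀}(q) ⊆ (ℝ^d)^* as the set of all limit points of sequences (df(q_n))_{n≥0} where q_n ∈ U₀ and q_n → q, and let C_f^{U₀}(q) be the convex hull of K_f^{U₀}(q). If f is differentiable at q, then df(q) ∈ C_f^{U₀}(q). -/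
/-!
Let `S` be the set of cluster points of `df` along `𝓝[U₀] q`. As `‖df‖ ≤ K` near `q`, `S` is
compact, and so is its convex hull (Carathéodory). If `df(q)` were outside the hull, some vector `v`
would separate it: `p v < c < df(q) v` for all `p ∈ S`. Then `df(x) v ≤ c` for all `x ∈ U₀` near
`q`, since otherwise a cluster point `p` with `c ≤ p v` would exist. By Fubini, almost every line
`s ↦ y + s • v` meets `U₀` in almost every point, so the fundamental theorem of calculus for the
Lipschitz function `s ↦ f (y + s • v)` gives `f (y + t • v) - f y ≤ c t` for almost every, hence by
continuity for every, `y` near `q`. At `y = q` this contradicts `df(q) v > c`.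
-/

open Filter MeasureTheory Metric Set Topology Function

theorem StrongDual.exists_eq_apply {E : Type*} [NormedAddCommGroup E] [NormedSpace ℝ E]
    [FiniteDimensional ℝ E] (g : StrongDual ℝ (StrongDual ℝ E)) :
    ∃ v : E, ∀ p : StrongDual ℝ E, g p = p v := by
  let φ : Module.Dual ℝ E ≃ₗ[ℝ] StrongDual ℝ E := LinearMap.toContinuousLinearMap
  obtain ⟨v, hv⟩ := (Module.evalEquiv ℝ E).surjective (g.toLinearMap ∘ₗ φ.toLinearMap)
  refine ⟨v, fun p => ?_⟩
  obtain ⟨p, rfl⟩ := φ.surjective p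
  exact (LinearMap.congr_fun hv p).symm

theorem IsCompact.convexHull {E : Type*} [NormedAddCommGroup E] [NormedSpace ℝ E]
    [FiniteDimensional ℝ E] {s : Set E} (hs : IsCompact s) :
    IsCompact (_root_.convexHull ℝ s) := by
  let N := Module.finrank ℝ E + 1
  let Φ : (Fin N → ℝ) × (Fin N → E) → E := fun p => ∑ i, p.1 i • p.2 i
  suffices _root_.convexHull ℝ s = Φ '' (stdSimplex ℝ (Fin N) ×ˢ univ.pi fun _ => s) by
    rw [this]
    exact ((isCompact_stdSimplex ℝ _).prod (isCompact_univ_pi fun _ => hs)).image (by fun_prop)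
  refine Subset.antisymm (fun x hx => ?_) ?_
  · -- Carathéodory: `x` is a convex combination of at most `N` points of `s`; pad with zeros.
    obtain ⟨ι, _, z, w, hzs, hz, hw0, hw1, rfl⟩ := eq_pos_convex_span_of_mem_convexHull hx
    obtain ⟨e⟩ : Nonempty (ι ↪ Fin N) := Embedding.nonempty_of_card_le <| by
      simpa [N] using hz.card_le_finrank_succ.trans (by simpa using Submodule.finrank_le _)
    obtain ⟨i₀⟩ : Nonempty ι := by
      by_contra h
      simp [not_nonempty_iff.1 h] at hw1
    refine ⟨(extend e w fun _ => 0, extend e z fun _ => z i₀),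
      ⟨⟨fun j => ?_, ?_⟩, fun j _ => ?_⟩, ?_⟩
    · by_cases hj : ∃ i, e i = j
      · obtain ⟨i, rfl⟩ := hj
        simpa [e.injective.extend_apply] using (hw0 i).le
      · simp [extend_apply' _ _ _ hj]
    · rw [← hw1]
      refine (Fintype.sum_of_injective e e.injective _ _ (fun j hj => ?_) fun i => ?_).symm
      · simp [extend_apply' _ _ _ hj]
      · simp [e.injective.extend_apply]
    · by_cases hj : ∃ i, e i = j
      · obtain ⟨i, rfl⟩ := hj
        simpa [e.injective.extend_apply] using hzs (mem_range_self i)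
      · simpa [extend_apply' _ _ _ hj] using hzs (mem_range_self i₀)
    · refine (Fintype.sum_of_injective e e.injective _ _ (fun j hj => ?_) fun i => ?_).symm
      · simp [extend_apply' _ _ _ hj]
      · simp [e.injective.extend_apply]
  · rintro _ ⟨⟨w, z⟩, ⟨⟨hw0, hw1⟩, hz⟩, rfl⟩
    exact (convex_convexHull ℝ s).sum_mem (fun i _ => hw0 i) hw1
      fun i _ => subset_convexHull ℝ s (hz i (mem_univ i))

theorem exists_seq_tendsto_subseq_iff_mapClusterPt {X Y : Type*} [TopologicalSpace X]
    [FirstCountableTopology X] [TopologicalSpace Y] [FirstCountableTopology Y]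
    {g : X → Y} {s : Set X} {q : X} {p : Y} :
    (∃ x : ℕ → X, (∀ n, x n ∈ s) ∧ Tendsto x atTop (𝓝 q) ∧
      ∃ φ : ℕ → ℕ, StrictMono φ ∧ Tendsto (fun n => g (x (φ n))) atTop (𝓝 p)) ↔
      MapClusterPt p (𝓝[s] q) g := by
  constructor
  · rintro ⟨x, hxs, hxq, φ, hφ, hgx⟩
    have : Tendsto (x ∘ φ) atTop (𝓝[s] q) :=
      tendsto_nhdsWithin_iff.2 ⟨hxq.comp hφ.tendsto_atTop, .of_forall fun n => hxs _⟩
    exact .of_comp this hgx.mapClusterPt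
  · intro hp
    obtain ⟨ψ, hgψ, hψ⟩ := hp.exists_seq_tendsto
    obtain ⟨N, hN⟩ := eventually_atTop.1 (tendsto_nhdsWithin_iff.1 hψ).2
    refine ⟨fun n => ψ (n + N), fun n => hN _ (Nat.le_add_left N n),
      (tendsto_add_atTop_iff_nat N).2 (tendsto_nhds_of_tendsto_nhdsWithin hψ),
      id, strictMono_id, (tendsto_add_atTop_iff_nat N).2 hgψ⟩

theorem AbsolutelyContinuousOnInterval.sub_le_mul_of_ae_deriv_le {g : ℝ → ℝ} {a b m : ℝ}
    (hab : a ≤ b) (hg : AbsolutelyContinuousOnInterval g a b)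
    (hm : ∀ᵐ s, s ∈ Icc a b → deriv g s ≤ m) : g b - g a ≤ m * (b - a) := by
  rw [← hg.integral_deriv_eq_sub]
  calc ∫ s in a..b, deriv g s ≤ ∫ _ in a..b, m :=
        intervalIntegral.integral_mono_ae_restrict hab hg.intervalIntegrable_deriv
          intervalIntegrable_const ((ae_restrict_iff' measurableSet_Icc).2 hm)
    _ = m * (b - a) := by simp [mul_comm]

section Segment

variable {E : Type*} [NormedAddCommGroup E] [NormedSpace ℝ E] {f : E → ℝ} {K : NNReal}
  {V : Set E} {v y : E} {m t : ℝ}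

theorem Convex.add_smul_mem_of_mem_Icc (hV : Convex ℝ V) (hy : y ∈ V) (hyt : y + t • v ∈ V)
    {s : ℝ} (hs : s ∈ Icc 0 t) : y + s • v ∈ V := by
  rcases hs.1.eq_or_lt with rfl | hs0
  · simpa using hy
  have ht : 0 < t := hs0.trans_le hs.2
  convert hV.add_smul_mem hy hyt ⟨div_nonneg hs.1 ht.le, (div_le_one ht).2 hs.2⟩ using 2
  rw [smul_smul, div_mul_cancel₀ _ ht.ne']

theorem LipschitzOnWith.sub_le_mul_of_ae_fderiv_apply_le_on_line (hV : Convex ℝ V)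
    (hf : LipschitzOnWith K f V) (ht : 0 ≤ t) (hy : y ∈ V) (hyt : y + t • v ∈ V)
    (h : ∀ᵐ s : ℝ, y + s • v ∈ V →
      DifferentiableAt ℝ f (y + s • v) ∧ fderiv ℝ f (y + s • v) v ≤ m) :
    f (y + t • v) - f y ≤ m * t := by
  have hmaps : MapsTo (fun s : ℝ => y + s • v) (uIcc 0 t) V := fun s hs =>
    hV.add_smul_mem_of_mem_Icc hy hyt (uIcc_of_le ht ▸ hs)
  have hline : LipschitzOnWith (K * ‖v‖₊) (fun s : ℝ => f (y + s • v)) (uIcc 0 t) :=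
    hf.comp (LipschitzWith.of_dist_le_mul fun a b => by
      simp [dist_eq_norm, ← sub_smul, norm_smul, mul_comm]).lipschitzOnWith hmaps
  have := hline.absolutelyContinuousOnInterval.sub_le_mul_of_ae_deriv_le (m := m) ht ?_
  · simpa using this
  filter_upwards [h] with s hs hst
  obtain ⟨hd, hle⟩ := hs (hmaps (uIcc_of_le ht ▸ hst))
  have : HasDerivAt (fun s : ℝ => y + s • v) v s := by
    simpa using ((hasDerivAt_id s).smul_const v).const_add y
  exact (hd.hasFDerivAt.comp_hasDerivAt s this).deriv.trans_le hle

end Segment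

section Clarke

variable {E : Type*} [NormedAddCommGroup E] [NormedSpace ℝ E] [MeasurableSpace E] [BorelSpace E]
  [FiniteDimensional ℝ E] {μ : Measure E} [μ.IsAddHaarMeasure]
  {f : E → ℝ} {K : NNReal} {U V U₀ : Set E} {v y q : E} {m t : ℝ}

theorem ae_ae_add_smul {p : E → Prop} (h : ∀ᵐ x ∂μ, p x) (v : E) :
    ∀ᵐ y ∂μ, ∀ᵐ s : ℝ, p (y + s • v) := by
  obtain ⟨N, hpN, hN, hN0⟩ := exists_measurable_superset_of_null (ae_iff.1 h)
  let L : ℝ →L[ℝ] E := ContinuousLinearMap.smulRight (1 : ℝ →L[ℝ] ℝ) v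
  have := (ae_ae_add_linearMap_mem_iff L.toLinearMap volume μ hN.compl).2
    (measure_eq_zero_iff_ae_notMem.1 hN0)
  filter_upwards [this] with y hy
  filter_upwards [hy] with s hs
  by_contra hp
  exact hs (hpN hp)

theorem LipschitzOnWith.sub_le_mul_of_ae_fderiv_apply_le (hV : IsOpen V) (hVc : Convex ℝ V)
    (hf : LipschitzOnWith K f V)
    (h : ∀ᵐ x ∂μ, x ∈ V → DifferentiableAt ℝ f x ∧ fderiv ℝ f x v ≤ m)
    (ht : 0 ≤ t) (hy : y ∈ V) (hyt : y + t • v ∈ V) :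
    f (y + t • v) - f y ≤ m * t := by
  let W := V ∩ (· + t • v) ⁻¹' V
  have hcont : ContinuousOn (fun y => f (y + t • v) - f y) W :=
    (hf.continuousOn.comp (continuous_add_const _).continuousOn fun _ hy => hy.2).sub
      (hf.continuousOn.mono inter_subset_left)
  let B := W ∩ (fun y => f (y + t • v) - f y) ⁻¹' Ioi (m * t)
  have hB : IsOpen B :=
    hcont.isOpen_inter_preimage (hV.inter (hV.preimage (continuous_add_const _))) isOpen_Ioi
  -- The inequality holds on almost every line, hence off a null open set.
  have hB0 : μ B = 0 := by
    refine measure_eq_zero_iff_ae_notMem.2 ?_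
    filter_upwards [ae_ae_add_smul h v] with z hz hzB
    exact (hf.sub_le_mul_of_ae_fderiv_apply_le_on_line hVc ht hzB.1.1 hzB.1.2 hz).not_gt hzB.2
  have : y ∉ B := (hB.measure_eq_zero_iff μ).1 hB0 ▸ notMem_empty y
  simpa [B, W, hy, hyt] using this

theorem LipschitzOnWith.frequently_lt_fderiv_apply (hU : IsOpen U) (hf : LipschitzOnWith K f U)
    (hmeas : μ (U \ U₀) = 0) (hdiff : ∀ x ∈ U₀, DifferentiableAt ℝ f x) (hq : q ∈ U)
    (hdq : DifferentiableAt ℝ f q) (v : E) {c : ℝ} (hc : c < fderiv ℝ f q v) :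
    ∃ᶠ x in 𝓝[U₀] q, c < fderiv ℝ f x v := by
  intro hle
  obtain ⟨r, hr, hrq⟩ := Metric.eventually_nhds_iff_ball.1
    ((hU.eventually_mem hq).and (eventually_nhdsWithin_iff.1 hle))
  have hrU : ball q r ⊆ U := fun x hx => (hrq x hx).1
  have hae : ∀ᵐ x ∂μ, x ∈ ball q r → DifferentiableAt ℝ f x ∧ fderiv ℝ f x v ≤ c := by
    filter_upwards [measure_eq_zero_iff_ae_notMem.1 hmeas] with x hx hxr
    have hx₀ : x ∈ U₀ := by_contra fun h => hx ⟨hrU hxr, h⟩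
    exact ⟨hdiff x hx₀, not_lt.1 ((hrq x hxr).2 hx₀)⟩
  have hslope : ∀ᶠ t in 𝓝[>] (0 : ℝ), t⁻¹ • (f (q + t • v) - f q) ≤ c := by
    have : ∀ᶠ t in 𝓝 (0 : ℝ), q + t • v ∈ ball q r :=
      (continuous_const.add (continuous_id.smul continuous_const)).continuousAt.preimage_mem_nhds
        (by simpa using ball_mem_nhds q hr)
    filter_upwards [nhdsWithin_le_nhds this, self_mem_nhdsWithin] with t ht ht0
    have := (hf.mono hrU).sub_le_mul_of_ae_fderiv_apply_le isOpen_ball (convex_ball q r) hae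
      ht0.le (mem_ball_self hr) ht
    rw [smul_eq_mul, inv_mul_le_iff₀ ht0]
    linarith
  have hderiv : HasDerivAt (fun t : ℝ => f (q + t • v)) (fderiv ℝ f q v) 0 := by
    refine hdq.hasFDerivAt.comp_hasDerivAt_of_eq 0 ?_ (by simp)
    simpa using ((hasDerivAt_id (0 : ℝ)).smul_const v).const_add q
  exact hc.not_ge (le_of_tendsto (by simpa using hderiv.tendsto_slope_zero_right) hslope)

theorem LipschitzOnWith.fderiv_mem_convexHull_mapClusterPt (hU : IsOpen U)
    (hf : LipschitzOnWith K f U) (hmeas : μ (U \ U₀) = 0)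
    (hdiff : ∀ x ∈ U₀, DifferentiableAt ℝ f x) (hq : q ∈ U) (hdq : DifferentiableAt ℝ f q) :
    fderiv ℝ f q ∈ convexHull ℝ {p | MapClusterPt p (𝓝[U₀] q) (fderiv ℝ f)} := by
  have hbound : ∀ᶠ x in 𝓝[U₀] q, fderiv ℝ f x ∈ closedBall 0 K :=
    nhdsWithin_le_nhds <| (hU.eventually_mem hq).mono fun x hx =>
      mem_closedBall_zero_iff.2 (norm_fderiv_le_of_lipschitzOn ℝ (hU.mem_nhds hx) hf)
  have hcompact : IsCompact {p | MapClusterPt p (𝓝[U₀] q) (fderiv ℝ f)} :=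
    (isCompact_closedBall 0 K).of_isClosed_subset isClosed_setOfPred_clusterPt
      fun p hp => isClosed_closedBall.mem_of_mapClusterPt hp hbound
  by_contra hL
  obtain ⟨g, c, hgS, hgL⟩ :=
    geometric_hahn_banach_closed_point (convex_convexHull ℝ _) hcompact.convexHull.isClosed hL
  obtain ⟨v, hv⟩ := StrongDual.exists_eq_apply g
  have hfreq : ∃ᶠ x in 𝓝[U₀] q, fderiv ℝ f x ∈ closedBall 0 K ∩ {p | c ≤ p v} :=
    ((hf.frequently_lt_fderiv_apply hU hmeas hdiff hq hdq v (hv _ ▸ hgL)).and_eventually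
      hbound).mono fun x hx => ⟨hx.2, hx.1.le⟩
  have hcompact_v : IsCompact (closedBall 0 K ∩ {p : StrongDual ℝ E | c ≤ p v}) :=
    (isCompact_closedBall 0 K).inter_right
      (isClosed_le continuous_const (ContinuousLinearMap.apply ℝ ℝ v).continuous)
  obtain ⟨p, ⟨-, hpv⟩, hp⟩ := hcompact_v.exists_mapClusterPt_of_frequently hfreq
  exact (hgS p (subset_convexHull ℝ _ hp)).not_ge (hv p ▸ hpv)

end Clarke

theorem clarke_lemma_general (d : ℕ) (U : Set (EuclideanSpace ℝ (Fin d))) (hU : IsOpen U)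
    (f : EuclideanSpace ℝ (Fin d) → ℝ) (K : NNReal) (hf : LipschitzOnWith K f U)
    (U₀ : Set (EuclideanSpace ℝ (Fin d)))
    (hmeas : MeasureTheory.volume (U \ U₀) = 0)
    (hdiff : ∀ x ∈ U₀, DifferentiableAt ℝ f x)
    (q : EuclideanSpace ℝ (Fin d)) (hq : q ∈ U) (hdq : DifferentiableAt ℝ f q) :
    fderiv ℝ f q ∈ convexHull ℝ
      {p : EuclideanSpace ℝ (Fin d) →L[ℝ] ℝ |
        ∃ x : ℕ → EuclideanSpace ℝ (Fin d),
          (∀ n, x n ∈ U₀) ∧ Tendsto x atTop (nhds q) ∧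
          ∃ φ : ℕ → ℕ, StrictMono φ ∧
            Tendsto (fun n => fderiv ℝ f (x (φ n))) atTop (nhds p)} := by
  simp_rw [exists_seq_tendsto_subseq_iff_mapClusterPt]
  exact hf.fderiv_mem_convexHull_mapClusterPt hU hmeas hdiff hq hdq

/-- Clarke's lemma (Lemma 4.9): if `f` is Lipschitz on an open set `U ⊆ ℝ^d`,
differentiable on a full-measure subset `U₀ ⊆ U`, and differentiable at `q ∈ U`,
then `df(q)` belongs to the convex hull of the set of limit points of sequences
`df(q_n)` with `q_n ∈ U₀`, `q_n → q`. -/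
theorem clarke_lemma (d : ℕ) (U : Set (EuclideanSpace ℝ (Fin d))) (hU : IsOpen U)
    (f : EuclideanSpace ℝ (Fin d) → ℝ) (K : NNReal) (hf : LipschitzOnWith K f U)
    (U₀ : Set (EuclideanSpace ℝ (Fin d))) (hU₀U : U₀ ⊆ U)
    (hmeas : MeasureTheory.volume (U \ U₀) = 0)
    (hdiff : ∀ x ∈ U₀, DifferentiableAt ℝ f x)
    (q : EuclideanSpace ℝ (Fin d)) (hq : q ∈ U) (hdq : DifferentiableAt ℝ f q) :
    fderiv ℝ f q ∈ convexHull ℝ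
      {p : EuclideanSpace ℝ (Fin d) →L[ℝ] ℝ |
        ∃ x : ℕ → EuclideanSpace ℝ (Fin d),
          (∀ n, x n ∈ U₀) ∧ Tendsto x atTop (nhds q) ∧
          ∃ φ : ℕ → ℕ, StrictMono φ ∧
            Tendsto (fun n => fderiv ℝ f (x (φ n))) atTop (nhds p)} :=
  clarke_lemma_general d U hU f K hf U₀ hmeas hdiff q hq hdq
end

section
/- Let γ : [a,b] → ℝ^n be a C¹ curve and let 𝒰 ⊆ ℝ × ℝ^n be a set whose complement has Lebesgue measure zero. Then there exists a sequence of C¹ curves γ_k : [a,b] → ℝ^n such that (i) for every k and for Lebesgue-almost every t ∈ [a,b], the point (t, γ_k(t)) belongs to 𝒰, and (ii) γ_k → γ and γ_k' → γ' uniformly on [a,b] (C¹ convergence). -/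
open Filter MeasureTheory Metric Set

/-- Perturbation of a `C¹` curve into curves lying almost everywhere in a full-measure
set (Lemma 4.5, Euclidean setting): given a `C¹` curve `γ : [a,b] → ℝ^n` and a set
`𝒰 ⊆ ℝ × ℝ^n` with null complement, there are `C¹` curves `γ_k` with `(t, γ_k(t)) ∈ 𝒰`
for a.e. `t ∈ [a,b]`, converging to `γ` in the `C¹` topology on `[a,b]`. -/
theorem perturb_curve_into_full_measure_set (n : ℕ) (a b : ℝ) (hab : a ≤ b)
    (γ : ℝ → EuclideanSpace ℝ (Fin n)) (hγ : ContDiff ℝ 1 γ)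
    (U : Set (ℝ × EuclideanSpace ℝ (Fin n)))
    (hU : MeasureTheory.volume Uᶜ = 0) :
    ∃ γk : ℕ → ℝ → EuclideanSpace ℝ (Fin n),
      (∀ k, ContDiff ℝ 1 (γk k)) ∧
      (∀ k, ∀ᵐ t ∂(MeasureTheory.volume : Measure ℝ), t ∈ Set.Icc a b → (t, γk k t) ∈ U) ∧
      TendstoUniformlyOn (fun k t => γk k t) γ atTop (Set.Icc a b) ∧
      TendstoUniformlyOn (fun k t => deriv (γk k) t) (deriv γ) atTop (Set.Icc a b) := by
  -- a measurable null superset of `Uᶜ`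
  obtain ⟨N, hUN, hNm, hN0⟩ := exists_measurable_superset_of_null hU
  -- the shear map is measure preserving
  have hΦ : MeasurePreserving
      (fun p : ℝ × EuclideanSpace ℝ (Fin n) => (p.1, γ p.1 + p.2))
      ((volume : Measure ℝ).prod (volume : Measure (EuclideanSpace ℝ (Fin n))))
      ((volume : Measure ℝ).prod (volume : Measure (EuclideanSpace ℝ (Fin n)))) := by
    refine (MeasurePreserving.id _).skew_product (g := fun t v => γ t + v) ?_ ?_
    · exact Measurable.add (hγ.continuous.measurable.comp measurable_fst) measurable_snd
    · exact ae_of_all _ fun t => map_add_left_eq_self _ _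
  have hvol : (volume : Measure (ℝ × EuclideanSpace ℝ (Fin n)))
      = (volume : Measure ℝ).prod (volume : Measure (EuclideanSpace ℝ (Fin n))) := rfl
  have hS0 : ((volume : Measure ℝ).prod (volume : Measure (EuclideanSpace ℝ (Fin n))))
      ((fun p : ℝ × EuclideanSpace ℝ (Fin n) => (p.1, γ p.1 + p.2)) ⁻¹' N) = 0 := by
    rw [hΦ.measure_preimage hNm.nullMeasurableSet, ← hvol, hN0]
  -- swap coordinates to slice in `v`
  set S : Set (EuclideanSpace ℝ (Fin n) × ℝ) :=
    {q : EuclideanSpace ℝ (Fin n) × ℝ | (q.2, γ q.2 + q.1) ∈ N} with hSdef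
  have hSm : MeasurableSet S := by
    have hm : Measurable (fun q : EuclideanSpace ℝ (Fin n) × ℝ => (q.2, γ q.2 + q.1)) :=
      Measurable.prodMk measurable_snd
        (Measurable.add (hγ.continuous.measurable.comp measurable_snd) measurable_fst)
    exact hm hNm
  have hS0' : ((volume : Measure (EuclideanSpace ℝ (Fin n))).prod (volume : Measure ℝ)) S = 0 := by
    have hswap := (Measure.measurePreserving_swap (μ := (volume : Measure ℝ))
      (ν := (volume : Measure (EuclideanSpace ℝ (Fin n))))).measure_preimage
      hSm.nullMeasurableSet
    have heq : Prod.swap ⁻¹' S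
        = (fun p : ℝ × EuclideanSpace ℝ (Fin n) => (p.1, γ p.1 + p.2)) ⁻¹' N := rfl
    rw [heq, hS0] at hswap
    exact hswap.symm
  -- a.e. v gives a null slice
  have hslice : ∀ᵐ v ∂(volume : Measure (EuclideanSpace ℝ (Fin n))),
      (volume : Measure ℝ) {t : ℝ | (t, γ t + v) ∈ N} = 0 := by
    have := (Measure.measure_prod_null (μ := (volume : Measure (EuclideanSpace ℝ (Fin n))))
      (ν := (volume : Measure ℝ)) hSm).mp hS0'
    filter_upwards [this] with v hv
    exact hv
  -- pick good shifts `v k` with `‖v k‖ < 1/(k+1)`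
  have hpick : ∀ k : ℕ, ∃ v : EuclideanSpace ℝ (Fin n), ‖v‖ < 1 / (k + 1) ∧
      (volume : Measure (ℝ)) {t : ℝ | (t, γ t + v) ∈ N} = 0 := by
    intro k
    have hpos : (0 : ℝ) < 1 / (k + 1) := by positivity
    by_contra hcon
    push_neg at hcon
    have hsub : Metric.ball (0 : EuclideanSpace ℝ (Fin n)) (1 / (k + 1)) ⊆
        {v | ¬ (volume : Measure ℝ) {t : ℝ | (t, γ t + v) ∈ N} = 0} := by
      intro v hv
      exact hcon v (by simpa using mem_ball_iff_norm.mp hv)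
    have h0 : (volume : Measure (EuclideanSpace ℝ (Fin n)))
        {v | ¬ (volume : Measure ℝ) {t : ℝ | (t, γ t + v) ∈ N} = 0} = 0 := by
      exact ae_iff.mp hslice
    have := measure_mono_null hsub h0
    exact absurd this (measure_ball_pos _ _ hpos).ne'
  choose v hvnorm hvnull using hpick
  refine ⟨fun k t => γ t + v k, ?_, ?_, ?_, ?_⟩
  · intro k
    exact hγ.add contDiff_const
  · intro k
    have : ∀ᵐ t ∂(volume : Measure ℝ), (t, γ t + v k) ∉ N :=
      measure_eq_zero_iff_ae_notMem.mp (hvnull k)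
    filter_upwards [this] with t ht _
    by_contra hmem
    exact ht (hUN hmem)
  · rw [Metric.tendstoUniformlyOn_iff]
    intro ε hε
    obtain ⟨K, hK⟩ := exists_nat_gt (1 / ε)
    filter_upwards [eventually_ge_atTop K] with k hk t _
    have h1 : (1 : ℝ) / (k + 1) < ε := by
      rw [div_lt_iff₀ (by positivity)]
      have h2 : 1 / ε < (k : ℝ) + 1 := by
        have : (K : ℝ) ≤ k := by exact_mod_cast hk
        linarith
      calc (1 : ℝ) = ε * (1 / ε) := by field_simp
        _ < ε * (k + 1) := mul_lt_mul_of_pos_left h2 hε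
    calc dist (γ t) (γ t + v k) = ‖v k‖ := by
          rw [dist_eq_norm]; simp
      _ < 1 / (k + 1) := hvnorm k
      _ < ε := h1
  · rw [Metric.tendstoUniformlyOn_iff]
    intro ε hε
    filter_upwards with k t _
    have hd : deriv (fun s => γ s + v k) t = deriv γ t := deriv_add_const _
    rw [hd, dist_self]
    exact hε
end

section
/- Let H : ℝ^d → ℝ be a continuous, strictly convex and superlinear function (H(p)/‖p‖ → ∞ as ‖p‖ → ∞). Then the convex hull of the set {(E,p) ∈ ℝ × ℝ^d : E + H(p) = 0} equals the set {(E,p) ∈ ℝ × ℝ^d : E + H(p) ≤ 0}. -/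
open Filter Metric Set

/-- The convex hull of the zero-energy level `{E + H(p) = 0}` of a continuous, strictly
convex, superlinear function `H : ℝ^d → ℝ` is the sublevel set `{E + H(p) ≤ 0}`
(convexity claim inside the proof of Proposition 4.8). -/
theorem convexHull_energy_level (d : ℕ) (hd : 0 < d)
    (H : EuclideanSpace ℝ (Fin d) → ℝ) (hHc : Continuous H)
    (hconv : StrictConvexOn ℝ Set.univ H)
    (hsup : Tendsto (fun p : EuclideanSpace ℝ (Fin d) => H p / ‖p‖)
      (comap norm atTop) atTop) :
    convexHull ℝ {x : ℝ × EuclideanSpace ℝ (Fin d) | x.1 + H x.2 = 0} =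
      {x : ℝ × EuclideanSpace ℝ (Fin d) | x.1 + H x.2 ≤ 0} := by
  have hco : ConvexOn ℝ Set.univ H := hconv.convexOn
  -- the sublevel set is convex
  have hcvx : Convex ℝ {x : ℝ × EuclideanSpace ℝ (Fin d) | x.1 + H x.2 ≤ 0} := by
    intro x hx y hy a b ha hb hab
    simp only [Set.mem_setOf_eq] at hx hy ⊢
    have hH := hco.2 (Set.mem_univ x.2) (Set.mem_univ y.2) ha hb hab
    have h1 : (a • x + b • y).1 = a * x.1 + b * y.1 := rfl
    have h2 : (a • x + b • y).2 = a • x.2 + b • y.2 := rfl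
    rw [h1, h2]
    simp only [smul_eq_mul] at hH
    nlinarith [mul_le_mul_of_nonneg_left hx ha, mul_le_mul_of_nonneg_left hy hb]
  apply subset_antisymm
  · exact convexHull_min (fun x hx => le_of_eq hx) hcvx
  · -- superlinearity: ∃ R, ∀ q, R ≤ ‖q‖ → ‖q‖ ≤ H q
    obtain ⟨R, hR⟩ : ∃ R : ℝ, ∀ q : EuclideanSpace ℝ (Fin d), R ≤ ‖q‖ → ‖q‖ ≤ H q := by
      have h := hsup.eventually (eventually_ge_atTop (1 : ℝ))
      rw [Filter.eventually_comap] at h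
      rw [eventually_atTop] at h
      obtain ⟨R₀, hR₀⟩ := h
      refine ⟨max R₀ 1, fun q hq => ?_⟩
      have h1 : (1 : ℝ) ≤ H q / ‖q‖ := hR₀ ‖q‖ (le_trans (le_max_left _ _) hq) q rfl
      have hqpos : (0 : ℝ) < ‖q‖ := lt_of_lt_of_le (by norm_num) (le_trans (le_max_right _ _) hq)
      calc ‖q‖ = 1 * ‖q‖ := (one_mul _).symm
        _ ≤ (H q / ‖q‖) * ‖q‖ := by nlinarith
        _ = H q := by field_simp
    intro x hx
    simp only [Set.mem_setOf_eq] at hx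
    set E := x.1 with hE
    set p := x.2 with hp
    set v : EuclideanSpace ℝ (Fin d) := EuclideanSpace.single ⟨0, hd⟩ (1 : ℝ) with hv
    have hvnorm : ‖v‖ = 1 := by simp [hv]
    set f : ℝ → ℝ := fun t => (H (p + t • v) + H (p - t • v)) / 2 with hf
    have hfc : Continuous f := by
      apply Continuous.div_const
      exact (hHc.comp (continuous_const.add (continuous_id.smul continuous_const))).add
        (hHc.comp (continuous_const.sub (continuous_id.smul continuous_const)))
    set T : ℝ := ‖p‖ + |R| + |E| + 1 with hT
    have hT0 : (0 : ℝ) ≤ T := by positivity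
    have hbig : ∀ s : ℝ, s = 1 ∨ s = -1 → -E ≤ H (p + (s * T) • v) := by
      intro s hs
      have hsT : ‖(s * T) • v‖ = T := by
        rcases hs with h | h <;> simp [h, norm_smul, hvnorm, abs_of_nonneg hT0]
      have hn : T - ‖p‖ ≤ ‖p + (s * T) • v‖ := by
        have := norm_sub_norm_le ((s * T) • v) (-p)
        simp only [norm_neg, sub_neg_eq_add] at this
        calc T - ‖p‖ = ‖(s * T) • v‖ - ‖p‖ := by rw [hsT]
          _ ≤ ‖(s * T) • v + p‖ := this
          _ = ‖p + (s * T) • v‖ := by rw [add_comm]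
      have hRle : R ≤ ‖p + (s * T) • v‖ := by
        have : R ≤ T - ‖p‖ := by
          have h1 : R ≤ |R| := le_abs_self R
          simp only [hT]; linarith [abs_nonneg (E : ℝ), norm_nonneg p]
        linarith
      have := hR _ hRle
      have hEle : -E ≤ T - ‖p‖ := by
        have : -E ≤ |E| := neg_le_abs E
        simp only [hT]; linarith [abs_nonneg R]
      linarith
    have hfT : -E ≤ f T := by
      have h1 := hbig 1 (Or.inl rfl)
      have h2 := hbig (-1) (Or.inr rfl)
      simp only [one_mul, neg_mul] at h1 h2
      have heq : p - T • v = p + (-T) • v := by module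
      rw [hf]
      simp only
      rw [heq]
      linarith
    have hf0 : f 0 ≤ -E := by
      rw [hf]; simp only [zero_smul, add_zero, sub_zero]
      linarith
    obtain ⟨t₀, _, ht₀⟩ : ∃ t₀ ∈ Icc (0 : ℝ) T, f t₀ = -E := by
      have := intermediate_value_Icc hT0 hfc.continuousOn
      exact this ⟨hf0, hfT⟩
    -- the two graph points
    set u₁ : ℝ × EuclideanSpace ℝ (Fin d) := (-(H (p + t₀ • v)), p + t₀ • v) with hu₁
    set u₂ : ℝ × EuclideanSpace ℝ (Fin d) := (-(H (p - t₀ • v)), p - t₀ • v) with hu₂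
    have hmem₁ : u₁ ∈ convexHull ℝ {x : ℝ × EuclideanSpace ℝ (Fin d) | x.1 + H x.2 = 0} :=
      subset_convexHull ℝ _ (by simp [hu₁])
    have hmem₂ : u₂ ∈ convexHull ℝ {x : ℝ × EuclideanSpace ℝ (Fin d) | x.1 + H x.2 = 0} :=
      subset_convexHull ℝ _ (by simp [hu₂])
    have hcomb := (convex_convexHull ℝ _) hmem₁ hmem₂ (by norm_num : (0:ℝ) ≤ 1/2)
      (by norm_num : (0:ℝ) ≤ 1/2) (by norm_num)
    have hxeq : x = (1/2 : ℝ) • u₁ + (1/2 : ℝ) • u₂ := by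
      have hft : (H (p + t₀ • v) + H (p - t₀ • v)) / 2 = -E := ht₀
      refine Prod.ext ?_ ?_
      · show E = (1/2 : ℝ) * (-(H (p + t₀ • v))) + (1/2 : ℝ) * (-(H (p - t₀ • v)))
        linarith
      · show p = (1/2 : ℝ) • (p + t₀ • v) + (1/2 : ℝ) • (p - t₀ • v)
        module
    rw [hxeq]
    exact hcomb
end

section
/- Let (X,d) be a metric space, let T : X → X be non-expansive (d(T(a), T(b)) ≤ d(a,b) for all a,b ∈ X), and let x : ℤ → X satisfy x(n+1) = T(x(n)) for all n ∈ ℤ. Suppose m : ℕ → ℕ is strictly increasing and the sequence (x(−m(k)))_{k≥0} converges in X. Then d( x(−(m(k+1) − m(k))), x(0) ) → 0 as k → ∞; in particular, the orbit point x(0) is recurrent in negative times along the subsequence of times m(k+1) − m(k). -/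
open Filter Metric Set

/-- Abstract recurrence for orbits of a non-expansive map (core of the proof of
Corollary 0.8): if `x : ℤ → X` is a bi-infinite orbit of a non-expansive map `T` and
`(x(−m(k)))_k` converges for a strictly increasing `m : ℕ → ℕ`, then
`d(x(−(m(k+1) − m(k))), x(0)) → 0`. -/
theorem nonexpansive_orbit_recurrence (X : Type*) [MetricSpace X]
    (T : X → X) (hT : ∀ a b : X, dist (T a) (T b) ≤ dist a b)
    (x : ℤ → X) (hx : ∀ n : ℤ, x (n + 1) = T (x n))
    (m : ℕ → ℕ) (hm : StrictMono m)
    (l : X) (hconv : Tendsto (fun k => x (-(m k : ℤ))) atTop (nhds l)) :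
    Tendsto (fun k => dist (x (-((m (k + 1) : ℤ) - (m k : ℤ)))) (x 0)) atTop
      (nhds 0) := by
  have hiter : ∀ (n : ℕ) (a : ℤ), x (a + n) = T^[n] (x a) := by
    intro n
    induction n with
    | zero => simp
    | succ n ih =>
      intro a
      have : a + (n + 1 : ℕ) = (a + n) + 1 := by push_cast; ring
      rw [this, hx, ih, Function.iterate_succ', Function.comp_apply]
  have hiterT : ∀ (n : ℕ) (a b : X), dist (T^[n] a) (T^[n] b) ≤ dist a b := by
    intro n
    induction n with
    | zero => simp
    | succ n ih =>
      intro a b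
      rw [Function.iterate_succ', Function.comp_apply, Function.comp_apply]
      exact le_trans (hT _ _) (ih a b)
  have hbound : ∀ k, dist (x (-((m (k + 1) : ℤ) - (m k : ℤ)))) (x 0)
      ≤ dist (x (-(m (k + 1) : ℤ))) (x (-(m k : ℤ))) := by
    intro k
    have h1 : (-((m (k + 1) : ℤ) - (m k : ℤ))) = (-(m (k + 1) : ℤ)) + (m k : ℕ) := by
      push_cast; ring
    have h2 : (0 : ℤ) = (-(m k : ℤ)) + (m k : ℕ) := by push_cast; ring
    rw [h1, h2, hiter, hiter]
    exact hiterT _ _ _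
  have hd : Tendsto (fun k => dist (x (-(m (k + 1) : ℤ))) (x (-(m k : ℤ)))) atTop (nhds 0) := by
    have h1 : Tendsto (fun k => x (-(m (k + 1) : ℤ))) atTop (nhds l) :=
      hconv.comp (tendsto_add_atTop_nat 1)
    have := (h1.dist hconv)
    simpa using this
  refine squeeze_zero (fun k => dist_nonneg) hbound hd
end
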